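/- arXiv:1903.05866 — 2 statements merged into one kernel-verified Lean document; each statement's English description precedes it below -/
import Mathlib

section
/- Let d ≥ 2 and let x_i, x_j ∈ ℝ^d with x_i ≠ x_j. Let Q₁, Q₂, Q₃, Q₄ ∈ ℝ^d be nonzero vectors with unit directions η_k = Q_k/‖Q_k‖, and let Q ∈ ℝ^d be a nonzero vector parallel to x_i − x_j such that Q₁ + Q₃ = Q and Q₂ + Q₄ = −Q. Set η = (x_i − x_j)/‖x_i − x_j‖. Then for every continuously differentiable, compactly supported function φ : ℝ^d → ℝ, the vector-valued sum (∫_{[0,∞)} ⟪η₁, ∇φ(x_i + s η₁)⟫ ds) • Q₁ + (∫_{[0,∞)} ⟪η₃, ∇φ(x_i + s η₃)⟫ ds) • Q₃ + (∫_{[0,∞)} ⟪η₂, ∇φ(x_j + s η₂)⟫ ds) • Q₂ + (∫_{[0,∞)} ⟪η₄, ∇φ(x_j + s η₄)⟫ ds) • Q₄ + (∫_{[0,‖x_i−x_j‖]} ⟪η, ∇φ(x_j + s η)⟫ ds) • Q equals 0. (This expresses that the tensor T = S^{Q₁+} + S^{Q₂+} + S^{Q₃+} + S^{Q₄+} + Q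 ⊗ η δ_C associated with a binary collision, where the fifth term is the 'colliton' supported on the segment C = [x_j, x_i], is divergence-free.) -/
/-!
Each term is a one-dimensional fundamental theorem of calculus: along a half-line from `x`
the integral of the directional derivative of `φ` is `-φ x` (compact support kills the far
end), and along the segment `[x_j, x_i]` it is `φ x_i - φ x_j`. The sum therefore collapses
to `-φ x_i • (Q₁ + Q₃ - Q) - φ x_j • (Q₂ + Q₄ + Q)`, which vanishes by momentum conservation.
-/

open scoped RealInnerProductSpace
open MeasureTheory Set

theorem HasCompactSupport.comp_add_smul {F α : Type*} [NormedAddCommGroup F] [NormedSpace ℝ F]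
    [Zero α] {f : F → α} (hf : HasCompactSupport f) (x : F) {η : F} (hη : η ≠ 0) :
    HasCompactSupport fun t : ℝ => f (x + t • η) :=
  hf.comp_isClosedEmbedding
    ((Homeomorph.addLeft x).isClosedEmbedding.comp (isClosedEmbedding_smul_left hη))

section LineRestriction

variable {E : Type*} [NormedAddCommGroup E] [InnerProductSpace ℝ E] [CompleteSpace E]
  {φ : E → ℝ} {x η : E}

theorem hasDerivAt_comp_add_smul {s : ℝ} (hφ : DifferentiableAt ℝ φ (x + s • η)) :
    HasDerivAt (fun t : ℝ => φ (x + t • η)) ⟪η, gradient φ (x + s • η)⟫ s := by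
  have hline : HasDerivAt (fun t : ℝ => x + t • η) η s := by
    simpa using ((hasDerivAt_id s).smul_const η).const_add x
  have := hφ.hasGradientAt.hasFDerivAt.comp_hasDerivAt s hline
  rwa [InnerProductSpace.toDual_apply_apply, real_inner_comm] at this

theorem deriv_comp_add_smul (hφ : Differentiable ℝ φ) :
    deriv (fun t : ℝ => φ (x + t • η)) = fun s => ⟪η, gradient φ (x + s • η)⟫ :=
  funext fun _ => (hasDerivAt_comp_add_smul (hφ _)).deriv

theorem integral_Ici_inner_gradient_comp_add_smul (hφ : ContDiff ℝ 1 φ)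
    (hφc : HasCompactSupport φ) (hη : η ≠ 0) :
    ∫ s in Ici (0 : ℝ), ⟪η, gradient φ (x + s • η)⟫ = -φ x := by
  have hline : ContDiff ℝ 1 fun t : ℝ => φ (x + t • η) := by fun_prop
  rw [integral_Ici_eq_integral_Ioi, ← deriv_comp_add_smul (hφ.differentiable one_ne_zero),
    (hφc.comp_add_smul x hη).integral_Ioi_deriv_eq hline]
  simp

theorem integral_Icc_inner_gradient_comp_add_smul (hφ : ContDiff ℝ 1 φ) {L : ℝ} (hL : 0 ≤ L) :
    ∫ s in Icc (0 : ℝ) L, ⟪η, gradient φ (x + s • η)⟫ = φ (x + L • η) - φ x := by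
  have hline : ContDiff ℝ 1 fun t : ℝ => φ (x + t • η) := by fun_prop
  rw [integral_Icc_eq_integral_Ioc, ← intervalIntegral.integral_of_le hL,
    ← deriv_comp_add_smul (hφ.differentiable one_ne_zero),
    intervalIntegral.integral_deriv_eq_sub (fun s _ => (hline.differentiable one_ne_zero) s)
      ((hline.continuous_deriv le_rfl).intervalIntegrable 0 L)]
  simp

/-- For `Q = 0` the integral is junk, but it is multiplied by `0`. -/
theorem integral_Ici_inner_gradient_unit_smul (hφ : ContDiff ℝ 1 φ) (hφc : HasCompactSupport φ)
    (Q : E) :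
    (∫ s in Ici (0 : ℝ), ⟪‖Q‖⁻¹ • Q, gradient φ (x + s • (‖Q‖⁻¹ • Q))⟫) • Q = -φ x • Q := by
  rcases eq_or_ne Q 0 with rfl | hQ
  · simp
  · rw [integral_Ici_inner_gradient_comp_add_smul hφ hφc
      (smul_ne_zero (inv_ne_zero (norm_ne_zero_iff.mpr hQ)) hQ)]

theorem integral_Icc_norm_inner_gradient_unit (hφ : ContDiff ℝ 1 φ) (v : E) :
    ∫ s in Icc (0 : ℝ) ‖v‖, ⟪‖v‖⁻¹ • v, gradient φ (x + s • (‖v‖⁻¹ • v))⟫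
      = φ (x + v) - φ x := by
  rw [integral_Icc_inner_gradient_comp_add_smul hφ (norm_nonneg v)]
  rcases eq_or_ne v 0 with rfl | hv
  · simp
  · rw [smul_inv_smul₀ (norm_ne_zero_iff.mpr hv)]

end LineRestriction

theorem stmt3_general (d : ℕ) (xi xj : EuclideanSpace ℝ (Fin d))
    (Q₁ Q₂ Q₃ Q₄ Q : EuclideanSpace ℝ (Fin d))
    (h13 : Q₁ + Q₃ = Q) (h24 : Q₂ + Q₄ = -Q)
    (φ : EuclideanSpace ℝ (Fin d) → ℝ) (hφ : ContDiff ℝ 1 φ) (hφc : HasCompactSupport φ) :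
    (∫ s in Set.Ici (0 : ℝ),
        ⟪‖Q₁‖⁻¹ • Q₁, gradient φ (xi + s • (‖Q₁‖⁻¹ • Q₁))⟫) • Q₁ +
    (∫ s in Set.Ici (0 : ℝ),
        ⟪‖Q₃‖⁻¹ • Q₃, gradient φ (xi + s • (‖Q₃‖⁻¹ • Q₃))⟫) • Q₃ +
    (∫ s in Set.Ici (0 : ℝ),
        ⟪‖Q₂‖⁻¹ • Q₂, gradient φ (xj + s • (‖Q₂‖⁻¹ • Q₂))⟫) • Q₂ +
    (∫ s in Set.Ici (0 : ℝ),
        ⟪‖Q₄‖⁻¹ • Q₄, gradient φ (xj + s • (‖Q₄‖⁻¹ • Q₄))⟫) • Q₄ +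
    (∫ s in Set.Icc (0 : ℝ) ‖xi - xj‖,
        ⟪‖xi - xj‖⁻¹ • (xi - xj), gradient φ (xj + s • (‖xi - xj‖⁻¹ • (xi - xj)))⟫) • Q
      = 0 := by
  simp only [integral_Ici_inner_gradient_unit_smul hφ hφc,
    integral_Icc_norm_inner_gradient_unit hφ, add_sub_cancel]
  linear_combination (norm := module) (-φ xi) • h13 + (-φ xj) • h24

/-- The tensor `T = S^{Q₁+} + S^{Q₂+} + S^{Q₃+} + S^{Q₄+} + Q ⊗ η δ_C` associated with a
binary collision, where the half-lines of `Q₁, Q₃` emanate from `x_i`, those of `Q₂, Q₄`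
from `x_j`, and the fifth term (the "colliton") is supported on the segment `C = [x_j, x_i]`
with direction `η = (x_i − x_j)/‖x_i − x_j‖`, is divergence-free: paired with a test
function `φ`, its row-wise divergence vanishes, provided `Q ∥ x_i − x_j`, `Q₁ + Q₃ = Q`
and `Q₂ + Q₄ = −Q`. -/
theorem stmt3 (d : ℕ) (hd : 2 ≤ d) (xi xj : EuclideanSpace ℝ (Fin d)) (hx : xi ≠ xj)
    (Q₁ Q₂ Q₃ Q₄ Q : EuclideanSpace ℝ (Fin d))
    (hQ₁ : Q₁ ≠ 0) (hQ₂ : Q₂ ≠ 0) (hQ₃ : Q₃ ≠ 0) (hQ₄ : Q₄ ≠ 0) (hQ : Q ≠ 0)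
    (hpar : ∃ c : ℝ, Q = c • (xi - xj))
    (h13 : Q₁ + Q₃ = Q) (h24 : Q₂ + Q₄ = -Q)
    (φ : EuclideanSpace ℝ (Fin d) → ℝ) (hφ : ContDiff ℝ 1 φ) (hφc : HasCompactSupport φ) :
    (∫ s in Set.Ici (0 : ℝ),
        ⟪‖Q₁‖⁻¹ • Q₁, gradient φ (xi + s • (‖Q₁‖⁻¹ • Q₁))⟫) • Q₁ +
    (∫ s in Set.Ici (0 : ℝ),
        ⟪‖Q₃‖⁻¹ • Q₃, gradient φ (xi + s • (‖Q₃‖⁻¹ • Q₃))⟫) • Q₃ +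
    (∫ s in Set.Ici (0 : ℝ),
        ⟪‖Q₂‖⁻¹ • Q₂, gradient φ (xj + s • (‖Q₂‖⁻¹ • Q₂))⟫) • Q₂ +
    (∫ s in Set.Ici (0 : ℝ),
        ⟪‖Q₄‖⁻¹ • Q₄, gradient φ (xj + s • (‖Q₄‖⁻¹ • Q₄))⟫) • Q₄ +
    (∫ s in Set.Icc (0 : ℝ) ‖xi - xj‖,
        ⟪‖xi - xj‖⁻¹ • (xi - xj), gradient φ (xj + s • (‖xi - xj‖⁻¹ • (xi - xj)))⟫) • Q
      = 0 :=
  stmt3_general d xi xj Q₁ Q₂ Q₃ Q₄ Q h13 h24 φ hφ hφc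
end

section
/- Let v, v', v₁ be vectors in a real inner product space, and set V = (1, v), V' = (1, v'), V₁ = (1, v₁) in ℝ × E with inner product ⟪(s,a),(t,b)⟫ = st + ⟪a,b⟫. Then the 3 × 3 Gram determinant det(⟪V_i, V_j⟫) computed for the family (V, V', V₁) equals the 2 × 2 Gram determinant of (v' − v, v₁ − v) plus the 3 × 3 Gram determinant of (v, v', v₁). (In the notation of the paper: |V ∧ V' ∧ V₁|² = |(v' − v) ∧ (v₁ − v)|² + |v ∧ v' ∧ v₁|².) -/
open scoped RealInnerProductSpace

namespace LinearMap.BilinForm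

variable {R M : Type*} [CommRing R] [AddCommGroup M] [Module R M]

theorem det_one_add_fin_three_eq_det_sub_add_det {B : LinearMap.BilinForm R M}
    (hB : B.IsSymm) (v v' v₁ : M) :
    Matrix.det !![1 + B v v, 1 + B v v', 1 + B v v₁;
                  1 + B v' v, 1 + B v' v', 1 + B v' v₁;
                  1 + B v₁ v, 1 + B v₁ v', 1 + B v₁ v₁] =
      Matrix.det !![B (v' - v) (v' - v), B (v' - v) (v₁ - v);
                    B (v₁ - v) (v' - v), B (v₁ - v) (v₁ - v)] +
      Matrix.det !![B v v, B v v', B v v₁;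
                    B v' v, B v' v', B v' v₁;
                    B v₁ v, B v₁ v', B v₁ v₁] := by
  simp only [Matrix.det_fin_three, Matrix.det_fin_two_of, Matrix.of_apply, Matrix.cons_val',
    Matrix.cons_val_zero, Matrix.cons_val_one, Matrix.cons_val_two, Matrix.head_cons,
    Matrix.tail_cons, Matrix.empty_val', Matrix.cons_val_fin_one, Matrix.head_fin_const, map_sub,
    LinearMap.sub_apply]
  rw [hB.eq v' v, hB.eq v₁ v, hB.eq v₁ v']
  ring

end LinearMap.BilinForm

/-- For `V = (1, v)`, `V' = (1, v')`, `V₁ = (1, v₁)` in `ℝ × E` with inner product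
`⟪(s,a),(t,b)⟫ = st + ⟪a,b⟫` (so that `⟪V_i, V_j⟫ = 1 + ⟪v_i, v_j⟫`), the identity
`|V ∧ V' ∧ V₁|² = |(v' − v) ∧ (v₁ − v)|² + |v ∧ v' ∧ v₁|²`: the 3 × 3 Gram determinant of
`(V, V', V₁)` equals the 2 × 2 Gram determinant of `(v' − v, v₁ − v)` plus the 3 × 3 Gram
determinant of `(v, v', v₁)`. -/
theorem stmt11 {E : Type*} [NormedAddCommGroup E] [InnerProductSpace ℝ E] (v v' v₁ : E) :
    (Matrix.det !![1 + ⟪v, v⟫, 1 + ⟪v, v'⟫, 1 + ⟪v, v₁⟫;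
                   1 + ⟪v', v⟫, 1 + ⟪v', v'⟫, 1 + ⟪v', v₁⟫;
                   1 + ⟪v₁, v⟫, 1 + ⟪v₁, v'⟫, 1 + ⟪v₁, v₁⟫]) =
      (Matrix.det !![⟪v' - v, v' - v⟫, ⟪v' - v, v₁ - v⟫;
                     ⟪v₁ - v, v' - v⟫, ⟪v₁ - v, v₁ - v⟫]) +
      (Matrix.det !![⟪v, v⟫, ⟪v, v'⟫, ⟪v, v₁⟫;
                     ⟪v', v⟫, ⟪v', v'⟫, ⟪v', v₁⟫;
                     ⟪v₁, v⟫, ⟪v₁, v'⟫, ⟪v₁, v₁⟫]) :=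
  LinearMap.BilinForm.det_one_add_fin_three_eq_det_sub_add_det
    (LinearMap.BilinForm.isSymm_iff.2 isSymm_inner) v v' v₁
end
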